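/- For every real z, t > 0, continuous φ : [0,t] → ℝ, and 0 < s ≤ t, one has 1/A_s(T_z(φ)) = 1/A_s(φ) + (e^z − 1)/A_t(φ). In particular A_t(T_z(φ)) = e^{−z} A_t(φ). -/

import Mathlib

open MeasureTheory Real

noncomputable def pathA (φ : ℝ → ℝ) (s : ℝ) : ℝ := ∫ u in (0:ℝ)..s, Real.exp (2 * φ u)

noncomputable def pathT (t z : ℝ) (φ : ℝ → ℝ) (s : ℝ) : ℝ :=
  φ s - Real.log (1 + (pathA φ s / pathA φ t) * (Real.exp z - 1))

/-!
With `A = pathA φ` and `c = (e^z - 1) / A t`, the path `T_z φ` is `φ - log (1 + c A)`, so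
`e^{2 T_z φ} = A' / (1 + c A)^2`, which is the derivative of `A / (1 + c A)`. Hence
`A_s(T_z φ) = A_s / (1 + c A_s)`, i.e. `1 / A_s(T_z φ) = 1 / A_s + c`; at `s = t` the
denominator is `e^z`.
-/

lemma exp_two_mul_sub_log (a : ℝ) {b : ℝ} (hb : 0 < b) :
    exp (2 * (a - log b)) = exp (2 * a) / b ^ 2 := by
  rw [mul_sub, exp_sub, mul_comm, ← log_rpow hb, exp_log (by positivity)]
  norm_cast

lemma one_add_mul_sub_one_pos {l x : ℝ} (hl₀ : 0 ≤ l) (hl₁ : l ≤ 1) (hx : 0 < x) :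
    0 < 1 + l * (x - 1) := by
  rcases hl₁.lt_or_eq with hl | rfl
  · nlinarith [mul_nonneg hl₀ hx.le]
  · linarith

section pathA

variable {φ : ℝ → ℝ}

@[simp]
lemma pathA_zero (φ : ℝ → ℝ) : pathA φ 0 = 0 :=
  intervalIntegral.integral_same

lemma hasDerivAt_pathA (hφ : Continuous φ) (u : ℝ) :
    HasDerivAt (pathA φ) (exp (2 * φ u)) u :=
  ((by fun_prop : Continuous fun u ↦ exp (2 * φ u)).integral_hasStrictDerivAt 0 u).hasDerivAt

lemma continuous_pathA (hφ : Continuous φ) : Continuous (pathA φ) :=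
  continuous_iff_continuousAt.2 fun u ↦ (hasDerivAt_pathA hφ u).continuousAt

lemma strictMono_pathA (hφ : Continuous φ) : StrictMono (pathA φ) :=
  strictMono_of_deriv_pos fun u ↦ (hasDerivAt_pathA hφ u).deriv ▸ exp_pos _

lemma pathA_pos (hφ : Continuous φ) {s : ℝ} (hs : 0 < s) : 0 < pathA φ s :=
  pathA_zero φ ▸ strictMono_pathA hφ hs

lemma pathA_nonneg (hφ : Continuous φ) {s : ℝ} (hs : 0 ≤ s) : 0 ≤ pathA φ s :=
  pathA_zero φ ▸ (strictMono_pathA hφ).monotone hs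

lemma pathA_sub_log_one_add_mul (hφ : Continuous φ) (c r : ℝ)
    (hpos : ∀ u ∈ Set.uIcc 0 r, 0 < 1 + pathA φ u * c) :
    pathA (fun u ↦ φ u - log (1 + pathA φ u * c)) r = pathA φ r / (1 + pathA φ r * c) := by
  have hA := hasDerivAt_pathA hφ
  have hintegrand : Set.EqOn (fun u ↦ exp (2 * (φ u - log (1 + pathA φ u * c))))
      (fun u ↦ exp (2 * φ u) / (1 + pathA φ u * c) ^ 2) (Set.uIcc 0 r) := fun u hu ↦
    exp_two_mul_sub_log _ (hpos u hu)
  have hderiv : ∀ u ∈ Set.uIcc 0 r, HasDerivAt (fun v ↦ pathA φ v / (1 + pathA φ v * c))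
      (exp (2 * φ u) / (1 + pathA φ u * c) ^ 2) u := by
    intro u hu
    refine ((hA u).div (((hA u).mul_const c).const_add 1) (hpos u hu).ne').congr_deriv ?_
    ring
  have hcont : ContinuousOn (fun u ↦ exp (2 * φ u) / (1 + pathA φ u * c) ^ 2) (Set.uIcc 0 r) :=
    have := continuous_pathA hφ
    ContinuousOn.div (by fun_prop) (by fun_prop) fun u hu ↦ (pow_pos (hpos u hu) 2).ne'
  rw [pathA, intervalIntegral.integral_congr hintegrand,
    intervalIntegral.integral_eq_sub_of_hasDerivAt hderiv hcont.intervalIntegrable]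
  simp

end pathA

theorem stmt1 (z t : ℝ) (ht : 0 < t) (φ : ℝ → ℝ) (hφ : Continuous φ)
    (s : ℝ) (hs : 0 < s) (hst : s ≤ t) :
    (pathA (pathT t z φ) s)⁻¹ = (pathA φ s)⁻¹ + (Real.exp z - 1) / pathA φ t ∧
    pathA (pathT t z φ) t = Real.exp (-z) * pathA φ t := by
  have hAt := pathA_pos hφ ht
  set c := (exp z - 1) / pathA φ t
  have hT : pathT t z φ = fun u ↦ φ u - log (1 + pathA φ u * c) := by
    funext u
    rw [pathT, div_mul_eq_mul_div, mul_div_assoc]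
  -- `1 + c A u` is a convex combination of `1` and `e^z`, as `A u / A t ∈ [0, 1]`
  have hD : ∀ u ∈ Set.Icc 0 t, 0 < 1 + pathA φ u * c := fun u hu ↦ by
    rw [← mul_div_assoc, mul_div_right_comm]
    exact one_add_mul_sub_one_pos (div_nonneg (pathA_nonneg hφ hu.1) hAt.le)
      ((div_le_one hAt).2 ((strictMono_pathA hφ).monotone hu.2)) (exp_pos z)
  have hTA : ∀ r ∈ Set.Icc 0 t, pathA (pathT t z φ) r = pathA φ r / (1 + pathA φ r * c) :=
    fun r hr ↦ hT ▸ pathA_sub_log_one_add_mul hφ c r fun u hu ↦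
      hD u (Set.Icc_subset_Icc_right hr.2 (Set.uIcc_of_le hr.1 ▸ hu))
  have hDt : 1 + pathA φ t * c = exp z := by
    rw [mul_div_cancel₀ _ hAt.ne', add_sub_cancel]
  constructor
  · rw [hTA s ⟨hs.le, hst⟩, inv_div, add_div, one_div, mul_div_cancel_left₀ _ (pathA_pos hφ hs).ne']
  · rw [hTA t ⟨ht.le, le_rfl⟩, hDt, exp_neg]
    ring
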